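/- arXiv:1902.04836 — 6 statements merged into one kernel-verified Lean document; each statement's English description precedes it below -/
import Mathlib

section
/- Let I be a countable set and let P ⊆ [0,∞]^I satisfy: for every a ∈ I there is u ∈ P with u_a > 0, and for every a ∈ I there is m ∈ [0,∞) such that u_a ≤ m for all u ∈ P. Then every element of the orthogonal P⊥ takes only finite values (P⊥ ⊆ [0,∞)^I), and P⊥ satisfies the same two properties: for every a ∈ I there is u' ∈ P⊥ with u'_a > 0, and for every a ∈ I there is m' ∈ [0,∞) with u'_a ≤ m' for all u' ∈ P⊥. -/
open scoped ENNReal NNReal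

noncomputable section

/-- ⟨u,u'⟩ = Σ_i u_i u'_i in [0,∞]. -/
def dotE {I : Type*} (u v : I → ℝ≥0∞) : ℝ≥0∞ := ∑' i, u i * v i

/-- The orthogonal P⊥ of a set P ⊆ [0,∞]^I. -/
def orthE {I : Type*} (P : Set (I → ℝ≥0∞)) : Set (I → ℝ≥0∞) :=
  {v | ∀ u ∈ P, dotE u v ≤ 1}

lemma term_le_dotE {I : Type*} (u v : I → ℝ≥0∞) (a : I) : u a * v a ≤ dotE u v :=
  ENNReal.le_tsum a

/-- If P ⊆ [0,∞]^I satisfies: for every a there is u ∈ P with u_a > 0 and for every a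
there is a finite m with u_a ≤ m for all u ∈ P, then P⊥ ⊆ [0,∞)^I and P⊥ satisfies the
same two properties. -/
theorem stmt2 {I : Type*} [Countable I] (P : Set (I → ℝ≥0∞))
    (h1 : ∀ a : I, ∃ u ∈ P, 0 < u a)
    (h2 : ∀ a : I, ∃ m : ℝ≥0, ∀ u ∈ P, u a ≤ (m : ℝ≥0∞)) :
    (∀ v ∈ orthE P, ∀ a : I, v a ≠ ⊤) ∧
    (∀ a : I, ∃ v ∈ orthE P, 0 < v a) ∧
    (∀ a : I, ∃ m' : ℝ≥0, ∀ v ∈ orthE P, v a ≤ (m' : ℝ≥0∞)) := by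
  classical
  have key : ∀ v ∈ orthE P, ∀ a : I, ∀ u ∈ P, u a * v a ≤ 1 := by
    intro v hv a u hu
    exact le_trans (term_le_dotE u v a) (hv u hu)
  refine ⟨?_, ?_, ?_⟩
  · intro v hv a
    obtain ⟨u, hu, hua⟩ := h1 a
    intro htop
    have h := key v hv a u hu
    rw [htop, ENNReal.mul_top hua.ne'] at h
    simp at h
  · intro a
    obtain ⟨m, hm⟩ := h2 a
    refine ⟨fun i => if i = a then ((m : ℝ≥0∞) + 1)⁻¹ else 0, ?_, ?_⟩
    · intro u hu
      have : dotE u (fun i => if i = a then ((m : ℝ≥0∞) + 1)⁻¹ else 0)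
          = u a * ((m : ℝ≥0∞) + 1)⁻¹ := by
        rw [dotE, tsum_eq_single a]
        · simp
        · intro b hb; simp [hb]
      rw [this]
      calc u a * ((m : ℝ≥0∞) + 1)⁻¹ ≤ ((m : ℝ≥0∞) + 1) * ((m : ℝ≥0∞) + 1)⁻¹ := by
            gcongr
            exact le_trans (hm u hu) (le_self_add)
        _ ≤ 1 := ENNReal.mul_inv_le_one _
    · simp [ENNReal.inv_pos]
  · intro a
    obtain ⟨u, hu, hua⟩ := h1 a
    obtain ⟨m, hm⟩ := h2 a
    have hne : u a ≠ ⊤ := fun h => by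
      have := hm u hu; rw [h] at this; simp at this
    refine ⟨(u a)⁻¹.toNNReal, ?_⟩
    intro v hv
    have h := key v hv a u hu
    have : v a ≤ (u a)⁻¹ := by
      rw [mul_comm, ← ENNReal.le_div_iff_mul_le (Or.inl hua.ne') (Or.inl hne), one_div] at h
      exact h
    rwa [ENNReal.coe_toNNReal (by simp [ENNReal.inv_ne_top, hua.ne'])]
end
end

section
/- Let X = (I,P) be a probabilistic coherence space and let x,y ∈ P. Then the pointwise minimum x∧y (defined by (x∧y)_a = min(x_a,y_a)) belongs to P and is the greatest lower bound of x and y in P for the pointwise order. Moreover x+y−(x∧y), which equals the pointwise maximum of x and y, belongs to the cone P^c = {z ∈ [0,∞)^I | ∃ε>0, εz ∈ P} and is the least upper bound of x and y in P^c: it is an upper bound, and every z ∈ P^c with x ≤ z and y ≤ z satisfies x+y−(x∧y) ≤ z. -/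
open scoped ENNReal NNReal

noncomputable section

/-- (I,P) is a probabilistic coherence space. -/
structure IsPCS {I : Type*} (P : Set (I → ℝ≥0∞)) : Prop where
  biorth : orthE (orthE P) = P
  nonzero : ∀ a, ∃ x ∈ P, 0 < x a
  bounded : ∀ a, ∃ m : ℝ≥0, ∀ x ∈ P, x a ≤ (m : ℝ≥0∞)

/-- The cone P^c = {z | ∃ ε > 0, εz ∈ P} of a PCS. -/
def coneOf {I : Type*} (P : Set (I → ℝ≥0∞)) : Set (I → ℝ≥0∞) :=
  {z | ∃ ε : ℝ≥0, 0 < ε ∧ (fun a => (ε : ℝ≥0∞) * z a) ∈ P}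

lemma dotE_comm {I : Type*} (u v : I → ℝ≥0∞) : dotE u v = dotE v u := by
  unfold dotE; congr 1; funext i; ring

lemma pcs_down {I : Type*} {P : Set (I → ℝ≥0∞)} (hP : IsPCS P)
    {x z : I → ℝ≥0∞} (hx : x ∈ P) (hz : z ≤ x) : z ∈ P := by
  rw [← hP.biorth]
  intro v hv
  rw [dotE_comm]
  have : dotE z v ≤ dotE x v :=
    ENNReal.tsum_le_tsum fun i => mul_le_mul_left (hz i) _
  exact this.trans (hv x hx)

lemma pcs_half {I : Type*} {P : Set (I → ℝ≥0∞)} (hP : IsPCS P)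
    {x y : I → ℝ≥0∞} (hx : x ∈ P) (hy : y ∈ P) :
    (fun a => (2⁻¹ : ℝ≥0∞) * (x a + y a)) ∈ P := by
  rw [← hP.biorth]
  intro v hv
  have h1 : dotE (fun a => (2⁻¹ : ℝ≥0∞) * (x a + y a)) v
      = 2⁻¹ * (dotE x v + dotE y v) := by
    unfold dotE
    rw [← ENNReal.tsum_add, ← ENNReal.tsum_mul_left]
    congr 1; funext i; ring
  rw [dotE_comm, h1]
  calc (2⁻¹ : ℝ≥0∞) * (dotE x v + dotE y v) ≤ 2⁻¹ * (1 + 1) := by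
        gcongr <;> [exact hv x hx; exact hv y hy]
    _ = 1 := by
        rw [one_add_one_eq_two, ENNReal.inv_mul_cancel two_ne_zero ENNReal.ofNat_ne_top]

/-- For x,y ∈ P: the pointwise min x⊓y belongs to P and is the glb of x and y in P;
moreover x+y−(x⊓y) equals the pointwise max x⊔y, belongs to the cone P^c, and is the
lub of x and y in P^c. -/
theorem stmt3 {I : Type*} [Countable I] (P : Set (I → ℝ≥0∞)) (hP : IsPCS P)
    (x y : I → ℝ≥0∞) (hx : x ∈ P) (hy : y ∈ P) :
    (x ⊓ y ∈ P ∧ x ⊓ y ≤ x ∧ x ⊓ y ≤ y ∧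
      ∀ z ∈ P, z ≤ x → z ≤ y → z ≤ x ⊓ y) ∧
    (x + y - x ⊓ y = x ⊔ y) ∧
    (x + y - x ⊓ y ∈ coneOf P) ∧
    (x ≤ x + y - x ⊓ y ∧ y ≤ x + y - x ⊓ y ∧
      ∀ z ∈ coneOf P, x ≤ z → y ≤ z → x + y - x ⊓ y ≤ z) := by
  have hfin : ∀ a, x a ≠ ⊤ := fun a => by
    obtain ⟨m, hm⟩ := hP.bounded a
    exact ne_top_of_le_ne_top ENNReal.coe_ne_top (hm x hx)
  have heq : x + y - x ⊓ y = x ⊔ y := by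
    funext a
    show x a + y a - min (x a) (y a) = max (x a) (y a)
    rw [← min_add_max (x a) (y a)]
    exact ENNReal.add_sub_cancel_left (ne_top_of_le_ne_top (hfin a) (min_le_left _ _))
  refine ⟨⟨pcs_down hP hx inf_le_left, inf_le_left, inf_le_right,
      fun z _ h1 h2 => le_inf h1 h2⟩, heq, ?_, ?_⟩
  · refine ⟨2⁻¹, by norm_num, ?_⟩
    rw [heq]
    refine pcs_down hP (pcs_half hP hx hy) fun a => ?_
    push_cast
    have h : (x ⊔ y) a ≤ x a + y a :=
      sup_le (le_add_right le_rfl) (le_add_left le_rfl)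
    exact mul_le_mul_right h _
  · rw [heq]
    exact ⟨le_sup_left, le_sup_right, fun z _ h1 h2 => sup_le h1 h2⟩
end
end

section
/- Let X = (I,P) be a probabilistic coherence space. Then the function d_X(x,y) = ‖x−(x∧y)‖_X + ‖y−(x∧y)‖_X is a metric on P: it is nonnegative, symmetric, vanishes exactly when x = y, and satisfies the triangle inequality d_X(x,z) ≤ d_X(x,y) + d_X(y,z) for all x,y,z ∈ P. -/
open scoped ENNReal NNReal

noncomputable section

/-- The norm ‖x‖_X = inf{r > 0 | x ∈ rP}. -/
def pnorm {I : Type*} (P : Set (I → ℝ≥0∞)) (x : I → ℝ≥0∞) : ℝ≥0∞ :=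
  sInf {r : ℝ≥0∞ | 0 < r ∧ ∃ z ∈ P, x = r • z}

/-- The distance d_X(x,y) = ‖x−(x∧y)‖_X + ‖y−(x∧y)‖_X. -/
def distX {I : Type*} (P : Set (I → ℝ≥0∞)) (x y : I → ℝ≥0∞) : ℝ≥0∞ :=
  pnorm P (x - x ⊓ y) + pnorm P (y - x ⊓ y)

/-!
Since `x - x ⊓ y = x - y` in truncated subtraction, `d(x, y) = ‖x - y‖ + ‖y - x‖`.
A biorthogonal `P = P⊥⊥` is downward closed and convex, so the norm is monotone and
subadditive; together with `x - z ≤ (x - y) + (y - z)` this gives the triangle inequality.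
Coordinates of points of `P` are bounded, so `‖u‖ = 0` forces `u = 0`, which gives definiteness.
-/

section Orthogonal

variable {I : Type*}

lemma dotE_mono_right (u : I → ℝ≥0∞) {v w : I → ℝ≥0∞} (h : v ≤ w) : dotE u v ≤ dotE u w :=
  ENNReal.tsum_le_tsum fun i => mul_le_mul_right (h i) _

lemma dotE_smul_add_smul (u v w : I → ℝ≥0∞) (a b : ℝ≥0∞) :
    dotE u (a • v + b • w) = a * dotE u v + b * dotE u w := by
  simp only [dotE, Pi.add_apply, Pi.smul_apply, smul_eq_mul, mul_add, mul_left_comm (u _),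
    ENNReal.tsum_add, ENNReal.tsum_mul_left]

lemma zero_mem_orthE (Q : Set (I → ℝ≥0∞)) : 0 ∈ orthE Q :=
  fun _ _ => by simp [dotE]

lemma isLowerSet_orthE (Q : Set (I → ℝ≥0∞)) : IsLowerSet (orthE Q) :=
  fun _ _ hle hw u hu => (dotE_mono_right u hle).trans (hw u hu)

lemma convex_orthE (Q : Set (I → ℝ≥0∞)) : Convex ℝ≥0∞ (orthE Q) := by
  intro v hv w hw a b _ _ hab u hu
  calc dotE u (a • v + b • w) = a * dotE u v + b * dotE u w := dotE_smul_add_smul u v w a b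
    _ ≤ a * 1 + b * 1 := by gcongr; exacts [hv u hu, hw u hu]
    _ = 1 := by rw [mul_one, mul_one, hab]

namespace IsPCS

variable {P : Set (I → ℝ≥0∞)} (hP : IsPCS P)
include hP

lemma zero_mem : 0 ∈ P := hP.biorth ▸ zero_mem_orthE _

lemma isLowerSet : IsLowerSet P := hP.biorth ▸ isLowerSet_orthE _

lemma convex : Convex ℝ≥0∞ P := hP.biorth ▸ convex_orthE _

end IsPCS

end Orthogonal

section Norm

variable {I : Type*} {P : Set (I → ℝ≥0∞)}

lemma pnorm_smul_le {r : ℝ≥0∞} (hr : 0 < r) {z : I → ℝ≥0∞} (hz : z ∈ P) :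
    pnorm P (r • z) ≤ r :=
  sInf_le ⟨hr, z, hz, rfl⟩

lemma le_pnorm {c : ℝ≥0∞} {x : I → ℝ≥0∞}
    (h : ∀ r, 0 < r → ∀ z ∈ P, x = r • z → c ≤ r) : c ≤ pnorm P x :=
  le_sInf fun _ ⟨hr, z, hz, hx⟩ => h _ hr z hz hx

lemma pnorm_zero (h0 : 0 ∈ P) : pnorm P (0 : I → ℝ≥0∞) = 0 :=
  nonpos_iff_eq_zero.mp <| le_of_forall_gt_imp_ge_of_dense fun _ hε => by
    simpa using pnorm_smul_le hε h0

lemma pnorm_mono (hP : IsLowerSet P) {u v : I → ℝ≥0∞} (h : u ≤ v) :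
    pnorm P u ≤ pnorm P v := by
  refine le_pnorm fun r hr z hz hv => ?_
  rcases eq_or_ne r ∞ with rfl | hr_top
  · exact le_top
  have hu : u = r • r⁻¹ • u := by
    rw [smul_smul, ENNReal.mul_inv_cancel hr.ne' hr_top, one_smul]
  have hle : r⁻¹ • u ≤ z := by
    calc r⁻¹ • u ≤ r⁻¹ • v := smul_le_smul_of_nonneg_left h zero_le
      _ = z := by rw [hv, smul_smul, ENNReal.inv_mul_cancel hr.ne' hr_top, one_smul]
  rw [hu]
  exact pnorm_smul_le hr (hP hle hz)

lemma pnorm_add_le (hP : Convex ℝ≥0∞ P) (u v : I → ℝ≥0∞) :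
    pnorm P (u + v) ≤ pnorm P u + pnorm P v := by
  conv_rhs => rw [pnorm, pnorm, sInf_eq_iInf', sInf_eq_iInf']
  refine ENNReal.le_iInf_add_iInf fun ⟨r, hr, z, hz, hu⟩ ⟨s, hs, w, hw, hv⟩ => ?_
  rcases eq_or_ne (r + s) ∞ with h_top | h_top
  · simp [h_top]
  have h_ne : r + s ≠ 0 := (add_pos_of_pos_of_nonneg hr zero_le).ne'
  have hsum : u + v = (r + s) • ((r / (r + s)) • z + (s / (r + s)) • w) := by
    rw [smul_add, smul_smul, smul_smul, ENNReal.mul_div_cancel h_ne h_top,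
      ENNReal.mul_div_cancel h_ne h_top, hu, hv]
  have hweights : r / (r + s) + s / (r + s) = 1 := by
    rw [ENNReal.div_add_div_same, ENNReal.div_self h_ne h_top]
  rw [hsum]
  exact pnorm_smul_le (hr.trans_le le_self_add) (hP hz hw zero_le zero_le hweights)

lemma apply_div_le_pnorm {a : I} {m : ℝ≥0∞} (hm : ∀ x ∈ P, x a ≤ m) (hm0 : m ≠ 0)
    (u : I → ℝ≥0∞) : u a / m ≤ pnorm P u :=
  le_pnorm fun r hr z hz hu => by
    rw [ENNReal.div_le_iff_le_mul (Or.inl hm0) (Or.inr hr.ne'), hu, Pi.smul_apply, smul_eq_mul]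
    exact mul_le_mul_right (hm z hz) r

lemma eq_zero_of_pnorm_eq_zero (hP : ∀ a, ∃ m : ℝ≥0, ∀ x ∈ P, x a ≤ (m : ℝ≥0∞))
    {u : I → ℝ≥0∞} (h : pnorm P u = 0) : u = 0 := by
  funext a
  obtain ⟨m, hm⟩ := hP a
  have hle := apply_div_le_pnorm (m := m + 1) (fun x hx => (hm x hx).trans le_self_add)
    (by simp) u
  rw [h, nonpos_iff_eq_zero, ENNReal.div_eq_zero_iff] at hle
  exact hle.resolve_right (by simp)

end Norm

section Distance

variable {I : Type*} {P : Set (I → ℝ≥0∞)}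

lemma tsub_inf_self_right (x y : I → ℝ≥0∞) : x - x ⊓ y = x - y := by
  funext i
  rcases le_total (x i) (y i) with h | h
  · simp [inf_eq_left.mpr h, tsub_eq_zero_of_le h]
  · simp [inf_eq_right.mpr h]

lemma distX_eq (P : Set (I → ℝ≥0∞)) (x y : I → ℝ≥0∞) :
    distX P x y = pnorm P (x - y) + pnorm P (y - x) := by
  rw [distX, tsub_inf_self_right, inf_comm, tsub_inf_self_right]

lemma distX_comm (P : Set (I → ℝ≥0∞)) (x y : I → ℝ≥0∞) : distX P x y = distX P y x := by
  rw [distX_eq, distX_eq, add_comm]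

lemma distX_self (h0 : 0 ∈ P) (x : I → ℝ≥0∞) : distX P x x = 0 := by
  rw [distX_eq, tsub_self, pnorm_zero h0, add_zero]

lemma eq_of_distX_eq_zero (hP : ∀ a, ∃ m : ℝ≥0, ∀ x ∈ P, x a ≤ (m : ℝ≥0∞))
    {x y : I → ℝ≥0∞} (h : distX P x y = 0) : x = y := by
  rw [distX_eq, add_eq_zero] at h
  exact le_antisymm (tsub_eq_zero_iff_le.mp (eq_zero_of_pnorm_eq_zero hP h.1))
    (tsub_eq_zero_iff_le.mp (eq_zero_of_pnorm_eq_zero hP h.2))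

lemma pnorm_tsub_le (hl : IsLowerSet P) (hc : Convex ℝ≥0∞ P) (x y z : I → ℝ≥0∞) :
    pnorm P (x - z) ≤ pnorm P (x - y) + pnorm P (y - z) :=
  (pnorm_mono hl tsub_le_tsub_add_tsub).trans (pnorm_add_le hc _ _)

lemma distX_triangle (hl : IsLowerSet P) (hc : Convex ℝ≥0∞ P) (x y z : I → ℝ≥0∞) :
    distX P x z ≤ distX P x y + distX P y z := by
  rw [distX_eq, distX_eq, distX_eq]
  calc pnorm P (x - z) + pnorm P (z - x)
      ≤ (pnorm P (x - y) + pnorm P (y - z)) + (pnorm P (z - y) + pnorm P (y - x)) :=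
        add_le_add (pnorm_tsub_le hl hc x y z) (pnorm_tsub_le hl hc z y x)
    _ = (pnorm P (x - y) + pnorm P (y - x)) + (pnorm P (y - z) + pnorm P (z - y)) := by ring

end Distance

theorem stmt4_general {I : Type*} (P : Set (I → ℝ≥0∞)) (hP : IsPCS P) :
    (∀ x ∈ P, ∀ y ∈ P, 0 ≤ distX P x y) ∧
    (∀ x ∈ P, ∀ y ∈ P, distX P x y = distX P y x) ∧
    (∀ x ∈ P, ∀ y ∈ P, (distX P x y = 0 ↔ x = y)) ∧
    (∀ x ∈ P, ∀ y ∈ P, ∀ z ∈ P, distX P x z ≤ distX P x y + distX P y z) :=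
  ⟨fun _ _ _ _ => zero_le,
    fun x _ y _ => distX_comm P x y,
    fun x _ _ _ => ⟨eq_of_distX_eq_zero hP.bounded, fun h => h ▸ distX_self hP.zero_mem x⟩,
    fun x _ y _ z _ => distX_triangle hP.isLowerSet hP.convex x y z⟩

/-- d_X is a metric on P: nonnegative, symmetric, it vanishes exactly on the diagonal,
and it satisfies the triangle inequality. -/
theorem stmt4 {I : Type*} [Countable I] (P : Set (I → ℝ≥0∞)) (hP : IsPCS P) :
    (∀ x ∈ P, ∀ y ∈ P, 0 ≤ distX P x y) ∧
    (∀ x ∈ P, ∀ y ∈ P, distX P x y = distX P y x) ∧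
    (∀ x ∈ P, ∀ y ∈ P, (distX P x y = 0 ↔ x = y)) ∧
    (∀ x ∈ P, ∀ y ∈ P, ∀ z ∈ P, distX P x z ≤ distX P x y + distX P y z) :=
  stmt4_general P hP
end
end

section
/- Let X = (I,P) and Y = (J,Q) be probabilistic coherence spaces and let t be a matrix morphism !X ⊸ Y, i.e. t : Mfin(I)×J → [0,∞) with Fun t(x) = (Σ_μ t_{μ,b} x^μ)_{b∈J} ∈ Q for all x ∈ P. Let x ∈ P and let u ∈ [0,∞)^I be such that x + u ∈ P. Then for every b ∈ J, Fun t(x)_b + Σ_{a∈I} Dt(x)_{a,b} u_a ≤ Fun t(x+u)_b; consequently the vector Fun t(x) + Dt(x)·u belongs to Q. -/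
open scoped ENNReal NNReal

noncomputable section

/-- x^μ = Π_{a∈I} x_a^{μ(a)}. -/
def mpow {I : Type*} (x : I → ℝ≥0∞) (μ : Multiset I) : ℝ≥0∞ := (μ.map x).prod

/-- Fun t(x)_b = Σ_μ t_{μ,b} x^μ. -/
def funApp {I J : Type*} (t : Multiset I → J → ℝ≥0∞) (x : I → ℝ≥0∞) : J → ℝ≥0∞ :=
  fun b => ∑' μ : Multiset I, t μ b * mpow x μ

/-- The derivative matrix Dt(x)_{a,b} = Σ_μ (μ(a)+1) t_{μ+[a],b} x^μ. -/
def matDeriv {I J : Type*} [DecidableEq I] (t : Multiset I → J → ℝ≥0∞)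
    (x : I → ℝ≥0∞) : I → J → ℝ≥0∞ :=
  fun a b => ∑' μ : Multiset I, ((μ.count a : ℝ≥0∞) + 1) * t (μ + {a}) b * mpow x μ

lemma mpow_zero' {I : Type*} (x : I → ℝ≥0∞) : mpow x 0 = 1 := by simp [mpow]

lemma mpow_cons {I : Type*} (x : I → ℝ≥0∞) (c : I) (s : Multiset I) :
    mpow x (c ::ₘ s) = x c * mpow x s := by
  simp [mpow]

/-- The "directional" sum Σ_a μ(a) x^{μ∖a} u_a. -/
def Sder {I : Type*} [DecidableEq I] (x u : I → ℝ≥0∞) (μ : Multiset I) : ℝ≥0∞ :=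
  ∑' a : I, (μ.count a : ℝ≥0∞) * mpow x (μ.erase a) * u a

lemma Sder_zero {I : Type*} [DecidableEq I] (x u : I → ℝ≥0∞) : Sder x u 0 = 0 := by
  simp [Sder]

lemma Sder_cons {I : Type*} [DecidableEq I] (x u : I → ℝ≥0∞) (c : I) (s : Multiset I) :
    Sder x u (c ::ₘ s) = x c * Sder x u s + mpow x s * u c := by
  have hterm : ∀ a : I,
      ((c ::ₘ s).count a : ℝ≥0∞) * mpow x ((c ::ₘ s).erase a) * u a
        = x c * ((s.count a : ℝ≥0∞) * mpow x (s.erase a) * u a)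
          + (if a = c then mpow x s * u c else 0) := by
    intro a
    by_cases hac : a = c
    · subst hac
      simp only [Multiset.count_cons_self, Multiset.erase_cons_head, if_pos rfl]
      push_cast
      have h1 : ((s.count a : ℝ≥0∞)) * mpow x s
          = x a * ((s.count a : ℝ≥0∞) * mpow x (s.erase a)) := by
        by_cases hmem : a ∈ s
        · have h2 : mpow x s = x a * mpow x (s.erase a) := by
            conv_lhs => rw [← Multiset.cons_erase hmem]
            rw [mpow_cons]
          rw [h2]; ring
        · simp [Multiset.count_eq_zero_of_notMem hmem]
      calc ((s.count a : ℝ≥0∞) + 1) * mpow x s * u a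
          = ((s.count a : ℝ≥0∞)) * mpow x s * u a + mpow x s * u a := by ring
        _ = x a * ((s.count a : ℝ≥0∞) * mpow x (s.erase a)) * u a + mpow x s * u a := by
            rw [h1]
        _ = x a * ((s.count a : ℝ≥0∞) * mpow x (s.erase a) * u a) + mpow x s * u a := by
            ring
    · rw [Multiset.count_cons_of_ne hac, Multiset.erase_cons_tail s (Ne.symm hac), mpow_cons,
        if_neg hac, add_zero]
      ring
  calc Sder x u (c ::ₘ s)
      = ∑' a : I, (x c * ((s.count a : ℝ≥0∞) * mpow x (s.erase a) * u a)
          + (if a = c then mpow x s * u c else 0)) := by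
        unfold Sder; exact tsum_congr hterm
    _ = x c * Sder x u s + mpow x s * u c := by
        rw [ENNReal.tsum_add, ENNReal.tsum_mul_left, tsum_ite_eq]
        rfl

lemma mpow_add_Sder_le {I : Type*} [DecidableEq I] (x u : I → ℝ≥0∞) (μ : Multiset I) :
    mpow x μ + Sder x u μ ≤ mpow (x + u) μ := by
  induction μ using Multiset.induction_on with
  | empty => simp [mpow_zero', Sder_zero]
  | cons c s ih =>
    have h1 : mpow (x + u) (c ::ₘ s) = (x c + u c) * mpow (x + u) s := by
      rw [mpow_cons]; rfl
    calc mpow x (c ::ₘ s) + Sder x u (c ::ₘ s)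
        = x c * mpow x s + (x c * Sder x u s + mpow x s * u c) := by
          rw [mpow_cons, Sder_cons]
      _ = x c * (mpow x s + Sder x u s) + u c * mpow x s := by ring
      _ ≤ x c * (mpow x s + Sder x u s) + u c * (mpow x s + Sder x u s) := by
          gcongr; exact le_self_add
      _ = (x c + u c) * (mpow x s + Sder x u s) := by ring
      _ ≤ (x c + u c) * mpow (x + u) s := by gcongr
      _ = mpow (x + u) (c ::ₘ s) := h1.symm

lemma deriv_reindex {I J : Type*} [DecidableEq I] (t : Multiset I → J → ℝ≥0∞)
    (x u : I → ℝ≥0∞) (b : J) :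
    ∑' a : I, matDeriv t x a b * u a = ∑' μ : Multiset I, t μ b * Sder x u μ := by
  have hstep : ∀ a : I, matDeriv t x a b * u a
      = ∑' μ : Multiset I, (μ.count a : ℝ≥0∞) * t μ b * mpow x (μ.erase a) * u a := by
    intro a
    set f : Multiset I → ℝ≥0∞ := fun μ =>
      (μ.count a : ℝ≥0∞) * t μ b * mpow x (μ.erase a) * u a with hf
    have hinj : Function.Injective (fun ν : Multiset I => ν + ({a} : Multiset I)) := by
      intro ν₁ ν₂ h
      simpa using h
    have hzero : ∀ μ ∉ Set.range (fun ν : Multiset I => ν + ({a} : Multiset I)),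
        f μ = 0 := by
      intro μ hμ
      have ha : a ∉ μ := by
        intro hmem
        exact hμ ⟨μ.erase a, by
          show μ.erase a + {a} = μ
          rw [add_comm, Multiset.singleton_add, Multiset.cons_erase hmem]⟩
      simp [hf, Multiset.count_eq_zero_of_notMem ha]
    have hsupp : Function.support f ⊆ Set.range (fun ν : Multiset I => ν + ({a} : Multiset I)) := by
      intro μ hμ
      by_contra h
      exact hμ (hzero μ h)
    rw [matDeriv, ← ENNReal.tsum_mul_right, ← Function.Injective.tsum_eq hinj hsupp]
    refine tsum_congr fun ν => ?_
    have h1 : ν + ({a} : Multiset I) = a ::ₘ ν := by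
      rw [add_comm, Multiset.singleton_add]
    rw [h1]
    simp only [hf, Multiset.count_cons_self, Multiset.erase_cons_head]
    push_cast
    ring
  calc ∑' a : I, matDeriv t x a b * u a
      = ∑' (a : I) (μ : Multiset I),
          (μ.count a : ℝ≥0∞) * t μ b * mpow x (μ.erase a) * u a := tsum_congr hstep
    _ = ∑' (μ : Multiset I) (a : I),
          (μ.count a : ℝ≥0∞) * t μ b * mpow x (μ.erase a) * u a := ENNReal.tsum_comm
    _ = ∑' μ : Multiset I, t μ b * Sder x u μ := by
        refine tsum_congr fun μ => ?_
        rw [Sder, ← ENNReal.tsum_mul_left]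
        exact tsum_congr fun a => by ring

/-- For a morphism t : !X ⊸ Y, x ∈ P and u with x + u ∈ P: for every b,
Fun t(x)_b + (Dt(x)·u)_b ≤ Fun t(x+u)_b, and the vector Fun t(x) + Dt(x)·u belongs
to Q. -/
theorem stmt8 {I J : Type*} [Countable I] [Countable J] [DecidableEq I]
    (P : Set (I → ℝ≥0∞)) (Q : Set (J → ℝ≥0∞)) (hP : IsPCS P) (hQ : IsPCS Q)
    (t : Multiset I → J → ℝ≥0∞) (htfin : ∀ μ b, t μ b ≠ ⊤)
    (ht : ∀ x ∈ P, funApp t x ∈ Q)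
    (x : I → ℝ≥0∞) (hx : x ∈ P) (u : I → ℝ≥0∞) (hxu : x + u ∈ P) :
    (∀ b : J, funApp t x b + ∑' a : I, matDeriv t x a b * u a ≤ funApp t (x + u) b) ∧
      (fun b => funApp t x b + ∑' a : I, matDeriv t x a b * u a) ∈ Q := by
  have hmain : ∀ b : J,
      funApp t x b + ∑' a : I, matDeriv t x a b * u a ≤ funApp t (x + u) b := by
    intro b
    rw [deriv_reindex]
    calc funApp t x b + ∑' μ : Multiset I, t μ b * Sder x u μ
        = ∑' μ : Multiset I, (t μ b * mpow x μ + t μ b * Sder x u μ) := by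
          rw [ENNReal.tsum_add]; rfl
      _ = ∑' μ : Multiset I, t μ b * (mpow x μ + Sder x u μ) := by
          exact tsum_congr fun μ => (mul_add _ _ _).symm
      _ ≤ ∑' μ : Multiset I, t μ b * mpow (x + u) μ := by
          gcongr with μ
          exact mpow_add_Sder_le x u μ
      _ = funApp t (x + u) b := rfl
  refine ⟨hmain, ?_⟩
  have hQmem : funApp t (x + u) ∈ Q := ht _ hxu
  rw [← hQ.biorth]
  intro w hw
  have h1 : dotE (funApp t (x + u)) w ≤ 1 := hw _ hQmem
  refine le_trans ?_ h1
  unfold dotE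
  refine ENNReal.tsum_le_tsum fun b => ?_
  rw [mul_comm]
  exact mul_le_mul_left (hmain b) (w b)
end
end

section
/- (Chain rule.) Let X = (I,P), Y = (J,Q), Z = (K,R) be probabilistic coherence spaces, let s : Mfin(I)×J → [0,∞) be such that Fun s(x) = (Σ_μ s_{μ,b} x^μ)_b ∈ Q for all x ∈ P, and let t : Mfin(J)×K → [0,∞) be such that Fun t(y) = (Σ_ν t_{ν,c} y^ν)_c ∈ R for all y ∈ Q. Let x ∈ P and u ∈ [0,∞)^I with x + u ∈ P. Then for every c ∈ K, the function θ ↦ Fun t(Fun s(x+θu))_c has a right derivative at θ = 0 equal to Σ_{b∈J} Dt(Fun s(x))_{b,c} · (Σ_{a∈I} Ds(x)_{a,b} u_a), i.e. the derivative of the composite at x applied to u equals Dt(Fun s(x)) applied to Ds(x)·u. -/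
open scoped ENNReal NNReal

noncomputable section

/-! For `θ ≥ 0` the composite `θ ↦ Fun t (Fun s (x + θu))_c` is a power series in `θ` with
coefficients in `[0, ∞]`: affine maps, products over multisets and arbitrary sums of such series
are again such series, and their coefficient of `θ` obeys the Leibniz rule, which after
reindexing the multisets is exactly the product of the derivative matrices. A series with
coefficients in `[0, ∞]` that is finite at `θ = 1` (here because `x + u ∈ P` and `R` is bounded)
has its coefficient of `θ` as right derivative at `0`: on `[0, 1]` the remainder is at most
`θ² g(1)`. -/

open Finset Topology Asymptotics

theorem ENNReal.tsum_mul_tsum_eq_tsum_sum_antidiagonal (f g : ℕ → ℝ≥0∞) :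
    (∑' n, f n) * ∑' n, g n = ∑' n, ∑ kl ∈ antidiagonal n, f kl.1 * g kl.2 := by
  have hprod : (∑' n, f n) * ∑' n, g n = ∑' kl : ℕ × ℕ, f kl.1 * g kl.2 := by
    simp_rw [ENNReal.tsum_prod', ENNReal.tsum_mul_left, ENNReal.tsum_mul_right]
  rw [hprod, ← HasAntidiagonal.sigmaAntidiagonalEquivProd.tsum_eq, ENNReal.tsum_sigma']
  exact tsum_congr fun n => Finset.tsum_subtype _ (fun kl : ℕ × ℕ => f kl.1 * g kl.2)

theorem ENNReal.tsum_mul_zero_pow (a : ℕ → ℝ≥0∞) : ∑' n, a n * 0 ^ n = a 0 := by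
  rw [tsum_eq_single 0 fun n hn => by simp [hn]]
  simp

section Multiset

variable {β : Type*}

theorem mpow_cons_s13 (y : β → ℝ≥0∞) (b : β) (ν : Multiset β) :
    mpow y (b ::ₘ ν) = y b * mpow y ν := by
  simp [mpow]

variable [DecidableEq β]

theorem mpow_eq_mul_mpow_erase (y : β → ℝ≥0∞) {b : β} {ν : Multiset β} (h : b ∈ ν) :
    mpow y ν = y b * mpow y (ν.erase b) :=
  (Multiset.prod_map_erase h).symm

theorem count_mul_mpow_erase_cons (y : β → ℝ≥0∞) (b₀ b : β) (ν : Multiset β) :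
    ((b₀ ::ₘ ν).count b : ℝ≥0∞) * mpow y ((b₀ ::ₘ ν).erase b)
      = (if b = b₀ then mpow y ν else 0) + y b₀ * ((ν.count b : ℝ≥0∞) * mpow y (ν.erase b)) := by
  by_cases hb : b = b₀
  · subst hb
    rw [Multiset.count_cons_self, Multiset.erase_cons_head, if_pos rfl]
    by_cases hmem : b ∈ ν
    · rw [mpow_eq_mul_mpow_erase y hmem]
      push_cast
      ring
    · simp [Multiset.count_eq_zero.mpr hmem]
  · rw [Multiset.count_cons_of_ne hb, Multiset.erase_cons_tail _ (Ne.symm hb), mpow_cons_s13,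
      if_neg hb]
    ring

theorem tsum_matDeriv_mul {K : Type*} (t : Multiset β → K → ℝ≥0∞) (y v : β → ℝ≥0∞) (c : K) :
    ∑' b, matDeriv t y b c * v b
      = ∑' ν, t ν c * ∑' b, (ν.count b : ℝ≥0∞) * v b * mpow y (ν.erase b) := by
  simp_rw [← ENNReal.tsum_mul_left]
  rw [ENNReal.tsum_comm]
  refine tsum_congr fun b => ?_
  have hcons : ∀ ν : Multiset β, ν + {b} = b ::ₘ ν := fun ν => by
    rw [add_comm, Multiset.singleton_add]
  have hsupp : (Function.support fun μ : Multiset β =>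
      t μ c * ((μ.count b : ℝ≥0∞) * v b * mpow y (μ.erase b))) ⊆ Set.range (· + {b}) := by
    intro μ hμ
    have hbμ : b ∈ μ := by
      by_contra h
      simp [Multiset.count_eq_zero.mpr h] at hμ
    exact ⟨μ.erase b, (hcons _).trans (Multiset.cons_erase hbμ)⟩
  rw [matDeriv, ← ENNReal.tsum_mul_right,
    ← (add_left_injective ({b} : Multiset β)).tsum_eq hsupp]
  refine tsum_congr fun ν => ?_
  rw [hcons, Multiset.count_cons_self, Multiset.erase_cons_head]
  push_cast
  ring

end Multiset

def HasPowerSeriesLinCoeff (g : ℝ≥0∞ → ℝ≥0∞) (L : ℝ≥0∞) : Prop :=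
  ∃ a : ℕ → ℝ≥0∞, (∀ q, g q = ∑' n, a n * q ^ n) ∧ a 1 = L

namespace HasPowerSeriesLinCoeff

variable {g h : ℝ≥0∞ → ℝ≥0∞} {L Lg Lh : ℝ≥0∞}

theorem const (k : ℝ≥0∞) : HasPowerSeriesLinCoeff (fun _ => k) 0 :=
  ⟨fun n => if n = 0 then k else 0, fun q => by
    rw [tsum_eq_single 0 fun n hn => by simp [hn]]; simp, rfl⟩

theorem affine (k₀ k₁ : ℝ≥0∞) : HasPowerSeriesLinCoeff (fun q => k₀ + q * k₁) k₁ := by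
  refine ⟨fun n => if n = 0 then k₀ else if n = 1 then k₁ else 0, fun q => ?_, rfl⟩
  rw [tsum_eq_sum (s := range 2) fun n hn => ?_]
  · simp [Finset.sum_range_succ, mul_comm]
  · have : n ≠ 0 ∧ n ≠ 1 := by simp at hn; omega
    simp [this]

theorem const_mul (k : ℝ≥0∞) (hg : HasPowerSeriesLinCoeff g L) :
    HasPowerSeriesLinCoeff (fun q => k * g q) (k * L) := by
  obtain ⟨a, hga, rfl⟩ := hg
  exact ⟨fun n => k * a n, fun q => by simp_rw [hga, ← ENNReal.tsum_mul_left, mul_assoc], rfl⟩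

theorem tsum {ι : Type*} {g : ι → ℝ≥0∞ → ℝ≥0∞} {L : ι → ℝ≥0∞}
    (hg : ∀ i, HasPowerSeriesLinCoeff (g i) (L i)) :
    HasPowerSeriesLinCoeff (fun q => ∑' i, g i q) (∑' i, L i) := by
  choose a hga haL using hg
  refine ⟨fun n => ∑' i, a i n, fun q => ?_, by simp_rw [haL]⟩
  simp only [hga, ← ENNReal.tsum_mul_right]
  exact ENNReal.tsum_comm

theorem mul (hg : HasPowerSeriesLinCoeff g Lg) (hh : HasPowerSeriesLinCoeff h Lh) :
    HasPowerSeriesLinCoeff (fun q => g q * h q) (Lg * h 0 + g 0 * Lh) := by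
  obtain ⟨a, hga, rfl⟩ := hg
  obtain ⟨b, hhb, rfl⟩ := hh
  refine ⟨fun n => ∑ kl ∈ antidiagonal n, a kl.1 * b kl.2, fun q => ?_, ?_⟩
  · beta_reduce
    rw [hga, hhb, ENNReal.tsum_mul_tsum_eq_tsum_sum_antidiagonal]
    refine tsum_congr fun n => ?_
    rw [Finset.sum_mul]
    refine Finset.sum_congr rfl fun kl hkl => ?_
    rw [← mem_antidiagonal.mp hkl, pow_add]
    ring
  · rw [hga 0, hhb 0, ENNReal.tsum_mul_zero_pow, ENNReal.tsum_mul_zero_pow]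
    simp [Finset.Nat.sum_antidiagonal_succ, add_comm]

theorem monotone (hg : HasPowerSeriesLinCoeff g L) : Monotone g := by
  obtain ⟨a, hga, -⟩ := hg
  intro q q' hqq'
  rw [hga, hga]
  exact ENNReal.tsum_le_tsum fun n => by gcongr

theorem exists_remainder_le (hg : HasPowerSeriesLinCoeff g L) {q : ℝ≥0∞} (hq : q ≤ 1) :
    ∃ r ≤ q ^ 2 * g 1, g q = g 0 + L * q + r := by
  obtain ⟨a, hga, rfl⟩ := hg
  refine ⟨∑' n, a (n + 2) * q ^ (n + 2), ?_, ?_⟩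
  · calc ∑' n, a (n + 2) * q ^ (n + 2) ≤ ∑' n, q ^ 2 * a (n + 2) :=
          ENNReal.tsum_le_tsum fun n => by
            rw [mul_comm, pow_add]
            exact mul_le_mul' (mul_le_of_le_one_left' (pow_le_one₀ zero_le hq)) le_rfl
      _ ≤ q ^ 2 * ∑' n, a n := by
          rw [ENNReal.tsum_mul_left]
          exact mul_le_mul' le_rfl (ENNReal.tsum_comp_le_tsum_of_injective (add_left_injective 2) a)
      _ = q ^ 2 * g 1 := by simp [hga]
  · rw [hga, hga 0, ENNReal.tsum_mul_zero_pow, tsum_eq_zero_add' ENNReal.summable,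
      tsum_eq_zero_add' ENNReal.summable]
    simp [add_assoc, mul_comm]

theorem hasDerivWithinAt (hg : HasPowerSeriesLinCoeff g L) (hg1 : g 1 ≠ ⊤) :
    HasDerivWithinAt (fun θ : ℝ => (g (ENNReal.ofReal θ)).toReal) L.toReal (Set.Ici 0) 0 := by
  rw [hasDerivWithinAt_iff_isLittleO]
  have hbound : ∀ᶠ θ in 𝓝[Set.Ici 0] (0 : ℝ),
      ‖(g (ENNReal.ofReal θ)).toReal - (g (ENNReal.ofReal 0)).toReal - (θ - 0) • L.toReal‖
        ≤ (g 1).toReal * ‖θ ^ 2‖ := by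
    filter_upwards [Icc_mem_nhdsGE zero_lt_one] with θ ⟨hθ0, hθ1⟩
    have hq : ENNReal.ofReal θ ≤ 1 := ENNReal.ofReal_le_one.mpr hθ1
    obtain ⟨r, hr, hgr⟩ := hg.exists_remainder_le hq
    have hfin : g (ENNReal.ofReal θ) ≠ ⊤ := ne_top_of_le_ne_top hg1 (hg.monotone hq)
    rw [hgr] at hfin ⊢
    obtain ⟨hlin, hr_fin⟩ := ENNReal.add_ne_top.mp hfin
    rw [ENNReal.toReal_add hlin hr_fin, ENNReal.toReal_add (ENNReal.add_ne_top.mp hlin).1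
      (ENNReal.add_ne_top.mp hlin).2, ENNReal.toReal_mul, ENNReal.toReal_ofReal hθ0,
      ENNReal.ofReal_zero]
    have hr_real := ENNReal.toReal_mono (ENNReal.mul_ne_top (by simp) hg1) hr
    rw [ENNReal.toReal_mul, ENNReal.toReal_pow, ENNReal.toReal_ofReal hθ0] at hr_real
    rw [smul_eq_mul, show ∀ a b c : ℝ, a + b * θ + c - a - (θ - 0) * b = c by intros; ring,
      Real.norm_of_nonneg ENNReal.toReal_nonneg, Real.norm_of_nonneg (by positivity), mul_comm]
    exact hr_real
  refine (IsBigO.of_bound _ hbound).trans_isLittleO ?_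
  simpa using (isLittleO_pow_id one_lt_two).mono nhdsWithin_le_nhds

section Multiset

variable {β : Type*} [DecidableEq β]

theorem multiset_prod {g : β → ℝ≥0∞ → ℝ≥0∞} {v : β → ℝ≥0∞}
    (hg : ∀ b, HasPowerSeriesLinCoeff (g b) (v b)) (ν : Multiset β) :
    HasPowerSeriesLinCoeff (fun q => (ν.map (g · q)).prod)
      (∑' b, (ν.count b : ℝ≥0∞) * v b * mpow (g · 0) (ν.erase b)) := by
  induction ν using Multiset.induction_on with
  | empty => simpa using const 1
  | cons b₀ ν ih =>
    convert (hg b₀).mul ih using 1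
    · simp
    · calc _ = ∑' b, ((if b = b₀ then v b₀ * mpow (g · 0) ν else 0)
              + g b₀ 0 * ((ν.count b : ℝ≥0∞) * v b * mpow (g · 0) (ν.erase b))) :=
            tsum_congr fun b => by
              rw [mul_right_comm, count_mul_mpow_erase_cons]
              split_ifs with h
              · subst h; ring
              · ring
        _ = _ := by rw [ENNReal.tsum_add, tsum_ite_eq, ENNReal.tsum_mul_left]; rfl

theorem funApp {K : Type*} {g : β → ℝ≥0∞ → ℝ≥0∞} {v : β → ℝ≥0∞}
    (hg : ∀ b, HasPowerSeriesLinCoeff (g b) (v b)) (t : Multiset β → K → ℝ≥0∞) (c : K) :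
    HasPowerSeriesLinCoeff (fun q => funApp t (g · q) c) (∑' b, matDeriv t (g · 0) b c * v b) := by
  rw [tsum_matDeriv_mul]
  exact tsum fun ν => (multiset_prod hg ν).const_mul (t ν c)

end Multiset

end HasPowerSeriesLinCoeff

theorem stmt13_general {I J K : Type*}
    [DecidableEq I] [DecidableEq J]
    (P : Set (I → ℝ≥0∞)) (Q : Set (J → ℝ≥0∞)) (R : Set (K → ℝ≥0∞))
    (hR : IsPCS R)
    (s : Multiset I → J → ℝ≥0∞)
    (hs : ∀ x ∈ P, funApp s x ∈ Q)
    (t : Multiset J → K → ℝ≥0∞)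
    (ht : ∀ y ∈ Q, funApp t y ∈ R)
    (x : I → ℝ≥0∞) (u : I → ℝ≥0∞) (hxu : x + u ∈ P) (c : K) :
    HasDerivWithinAt
      (fun θ : ℝ =>
        (funApp t (funApp s (fun a => x a + ENNReal.ofReal θ * u a)) c).toReal)
      ((∑' b : J, matDeriv t (funApp s x) b c * ∑' a : I, matDeriv s x a b * u a).toReal)
      (Set.Ici (0:ℝ)) 0 := by
  have hinner : ∀ b, HasPowerSeriesLinCoeff (fun q => funApp s (fun a => x a + q * u a) b)
      (∑' a, matDeriv s x a b * u a) := fun b => by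
    simpa using HasPowerSeriesLinCoeff.funApp (fun a => .affine (x a) (u a)) s b
  have houter := HasPowerSeriesLinCoeff.funApp hinner t c
  simp only [zero_mul, add_zero] at houter
  refine houter.hasDerivWithinAt ?_
  obtain ⟨m, hm⟩ := hR.bounded c
  have hxu' : (fun a => x a + 1 * u a) = x + u := by simp only [one_mul]; rfl
  show funApp t (funApp s (fun a => x a + 1 * u a)) c ≠ ⊤
  rw [hxu']
  exact ne_top_of_le_ne_top ENNReal.coe_ne_top (hm _ (ht _ (hs _ hxu)))

/-- Chain rule: for morphisms s : !X ⊸ Y, t : !Y ⊸ Z, x ∈ P and u with x + u ∈ P,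
the map θ ↦ Fun t(Fun s(x+θu))_c has right derivative at θ = 0 equal to
Σ_b Dt(Fun s(x))_{b,c} (Σ_a Ds(x)_{a,b} u_a). -/
theorem stmt13 {I J K : Type*} [Countable I] [Countable J] [Countable K]
    [DecidableEq I] [DecidableEq J]
    (P : Set (I → ℝ≥0∞)) (Q : Set (J → ℝ≥0∞)) (R : Set (K → ℝ≥0∞))
    (hP : IsPCS P) (hQ : IsPCS Q) (hR : IsPCS R)
    (s : Multiset I → J → ℝ≥0∞) (hsfin : ∀ μ b, s μ b ≠ ⊤)
    (hs : ∀ x ∈ P, funApp s x ∈ Q)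
    (t : Multiset J → K → ℝ≥0∞) (htfin : ∀ ν c, t ν c ≠ ⊤)
    (ht : ∀ y ∈ Q, funApp t y ∈ R)
    (x : I → ℝ≥0∞) (u : I → ℝ≥0∞) (hx : x ∈ P) (hxu : x + u ∈ P) (c : K) :
    HasDerivWithinAt
      (fun θ : ℝ =>
        (funApp t (funApp s (fun a => x a + ENNReal.ofReal θ * u a)) c).toReal)
      ((∑' b : J, matDeriv t (funApp s x) b c * ∑' a : I, matDeriv s x a b * u a).toReal)
      (Set.Ici (0:ℝ)) 0 :=
  stmt13_general P Q R hR s hs t ht x u hxu c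
end
end

section
/- Let X = (I,P) and Z = (K,R) be probabilistic coherence spaces. For x ∈ [0,∞)^I and z ∈ [0,∞)^K define x⊗z ∈ [0,∞)^{I×K} by (x⊗z)_{(a,c)} = x_a z_c, and set T = ({x⊗z | x ∈ P, z ∈ R})⊥⊥ ⊆ [0,∞)^{I×K}. Then (I×K, T) is a probabilistic coherence space: T⊥⊥ = T, for every (a,c) ∈ I×K there is w ∈ T with w_{(a,c)} > 0, and for every (a,c) ∈ I×K there is m ∈ [0,∞) with w_{(a,c)} ≤ m for all w ∈ T. -/
open scoped ENNReal NNReal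

noncomputable section

/-- The set of simple tensors {x⊗z | x ∈ P, z ∈ R}. -/
def tensSet {I K : Type*} (P : Set (I → ℝ≥0∞)) (R : Set (K → ℝ≥0∞)) :
    Set (I × K → ℝ≥0∞) :=
  {w | ∃ x ∈ P, ∃ z ∈ R, w = fun q => x q.1 * z q.2}

lemma subset_biorthE {I : Type*} (S : Set (I → ℝ≥0∞)) : S ⊆ orthE (orthE S) :=
  fun u hu v hv => by rw [dotE_comm]; exact hv u hu

lemma orthE_anti {I : Type*} {S T : Set (I → ℝ≥0∞)} (h : S ⊆ T) :
    orthE T ⊆ orthE S := fun v hv u hu => hv u (h hu)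

lemma triple_orthE {I : Type*} (S : Set (I → ℝ≥0∞)) :
    orthE (orthE (orthE S)) = orthE S :=
  le_antisymm (orthE_anti (subset_biorthE S)) (subset_biorthE (orthE S))

/-- Tensor product of PCSs: (I×K, ({x⊗z | x ∈ P, z ∈ R})⊥⊥) is a probabilistic
coherence space. -/
theorem stmt19 {I K : Type*} [Countable I] [Countable K]
    (P : Set (I → ℝ≥0∞)) (R : Set (K → ℝ≥0∞)) (hP : IsPCS P) (hR : IsPCS R) :
    IsPCS (orthE (orthE (tensSet P R))) := by
  refine ⟨triple_orthE _, ?_, ?_⟩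
  · rintro ⟨a, c⟩
    obtain ⟨x, hx, hxa⟩ := hP.nonzero a
    obtain ⟨z, hz, hzc⟩ := hR.nonzero c
    refine ⟨fun q => x q.1 * z q.2, subset_biorthE _ ⟨x, hx, z, hz, rfl⟩, ?_⟩
    exact ENNReal.mul_pos hxa.ne' hzc.ne'
  · rintro ⟨a, c⟩
    obtain ⟨ma, hma⟩ := hP.bounded a
    obtain ⟨mc, hmc⟩ := hR.bounded c
    obtain ⟨x, hx, hxa⟩ := hP.nonzero a
    obtain ⟨z, hz, hzc⟩ := hR.nonzero c
    have hma0 : (ma : ℝ≥0∞) ≠ 0 := fun h => by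
      simpa [h] using lt_of_lt_of_le hxa (hma x hx)
    have hmc0 : (mc : ℝ≥0∞) ≠ 0 := fun h => by
      simpa [h] using lt_of_lt_of_le hzc (hmc z hz)
    have hM0 : ((ma : ℝ≥0∞) * mc) ≠ 0 := mul_ne_zero hma0 hmc0
    have hMt : ((ma : ℝ≥0∞) * mc) ≠ ∞ := by
      simp [ENNReal.mul_ne_top]
    classical
    set v : I × K → ℝ≥0∞ := fun q => if q = (a, c) then ((ma : ℝ≥0∞) * mc)⁻¹ else 0
      with hv
    have hvorth : v ∈ orthE (tensSet P R) := by
      rintro u ⟨x', hx', z', hz', rfl⟩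
      have : dotE (fun q => x' q.1 * z' q.2) v
          = (x' a * z' c) * ((ma : ℝ≥0∞) * mc)⁻¹ := by
        rw [dotE, tsum_eq_single (a, c)]
        · simp [hv]
        · intro q hq; simp [hv, hq]
      rw [this]
      calc (x' a * z' c) * ((ma : ℝ≥0∞) * mc)⁻¹
          ≤ ((ma : ℝ≥0∞) * mc) * ((ma : ℝ≥0∞) * mc)⁻¹ :=
            mul_le_mul_left (mul_le_mul' (hma x' hx') (hmc z' hz')) _
        _ = 1 := ENNReal.mul_inv_cancel hM0 hMt
    refine ⟨ma * mc, fun w hw => ?_⟩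
    have hle : v (a, c) * w (a, c) ≤ 1 := le_trans (ENNReal.le_tsum (a, c)) (hw v hvorth)
    have : ((ma : ℝ≥0∞) * mc)⁻¹ * w (a, c) ≤ 1 := by simpa [hv] using hle
    push_cast
    rwa [ENNReal.inv_mul_le_iff hM0 hMt, mul_one] at this
end
end
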